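/- Under the same setup as the posterior-mean Lipschitz result, define the posterior variance σ²(x; θ) = k_θ(x,x) − k_θ(x)ᵀ (K_θ + σ²I)⁻¹ k_θ(x). Then |σ²(x; θ̂) − σ²(x; θ)| ≤ (1 + (t−1)/σ²)² · d(θ̂, θ) for all x. -/

import Mathlib

/-!
Put `A = K + σ²` and `u = A⁻¹ v`, where `v = k(x)`, and hatted versions for `θ̂`. Because `Â` is
symmetric, the difference of the quadratic forms is
`v̂ ⬝ û - v ⬝ u = (v̂ - v) ⬝ (û + u) - û ⬝ ((K̂ - K) u)`,
which replaces the inverse difference identity. Positive semidefiniteness gives the coercivity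
bound `σ² ‖u‖ ≤ ‖A u‖ = ‖v‖`, and the entrywise bounds give `‖v‖ ≤ √m`, `‖v̂ - v‖ ≤ √m d` and
`‖(K̂ - K) u‖ ≤ m d ‖u‖`. Together with `|k̂(x,x) - k(x,x)| ≤ d` this yields
`d + 2 m d / σ² + m² d / σ⁴ = (1 + m / σ²)² d`.
-/

open Matrix WithLp

theorem Matrix.PosSemidef.posDef_add_smul_one {n : Type*} [DecidableEq n] {K : Matrix n n ℝ}
    (hK : K.PosSemidef) {s : ℝ} (hs : 0 < s) : (K + s • 1).PosDef :=
  PosDef.posSemidef_add hK (PosDef.one.smul hs)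

section

variable {n : Type*} [Fintype n]

theorem abs_dotProduct_le_norm_mul_norm (u w : n → ℝ) :
    |u ⬝ᵥ w| ≤ ‖toLp 2 u‖ * ‖toLp 2 w‖ := by
  simpa [EuclideanSpace.inner_toLp_toLp, dotProduct_comm w u]
    using abs_real_inner_le_norm (toLp 2 u) (toLp 2 w)

theorem dotProduct_self_eq_norm_sq (u : n → ℝ) : u ⬝ᵥ u = ‖toLp 2 u‖ ^ 2 := by
  rw [← real_inner_self_eq_norm_sq, EuclideanSpace.inner_toLp_toLp, star_trivial]

theorem norm_toLp_le_sqrt_card_mul {v : n → ℝ} {c : ℝ} (h : ∀ i, |v i| ≤ c) :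
    ‖toLp 2 v‖ ≤ √(Fintype.card n) * c := by
  rcases isEmpty_or_nonempty n with hn | ⟨⟨i₀⟩⟩
  · simp [Subsingleton.elim v 0]
  have hc : 0 ≤ c := (abs_nonneg _).trans (h i₀)
  have hsum : ∑ i, v i ^ 2 ≤ Fintype.card n * c ^ 2 := by
    calc ∑ i, v i ^ 2 ≤ ∑ _i : n, c ^ 2 :=
          Finset.sum_le_sum fun i _ => sq_le_sq' (abs_le.mp (h i)).1 (abs_le.mp (h i)).2
      _ = Fintype.card n * c ^ 2 := by simp
  rw [EuclideanSpace.norm_eq, ← Real.sqrt_sq hc, ← Real.sqrt_mul (Nat.cast_nonneg _)]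
  exact Real.sqrt_le_sqrt (by simpa using hsum)

theorem norm_mulVec_le_card_mul {M : Matrix n n ℝ} {c : ℝ} (hM : ∀ i j, |M i j| ≤ c)
    (v : n → ℝ) : ‖toLp 2 (M *ᵥ v)‖ ≤ Fintype.card n * c * ‖toLp 2 v‖ := by
  have hrow : ∀ i, |(M *ᵥ v) i| ≤ √(Fintype.card n) * c * ‖toLp 2 v‖ := fun i =>
    (abs_dotProduct_le_norm_mul_norm (M i) v).trans <|
      mul_le_mul_of_nonneg_right (norm_toLp_le_sqrt_card_mul (hM i)) (norm_nonneg _)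
  calc ‖toLp 2 (M *ᵥ v)‖ ≤ √(Fintype.card n) * (√(Fintype.card n) * c * ‖toLp 2 v‖) :=
        norm_toLp_le_sqrt_card_mul hrow
    _ = Fintype.card n * c * ‖toLp 2 v‖ := by
        rw [← mul_assoc, ← mul_assoc, Real.mul_self_sqrt (Nat.cast_nonneg _)]

theorem Matrix.mulVec_dotProduct_sub_mulVec_dotProduct {R : Type*} [CommRing R]
    {A B : Matrix n n R} (hB : Bᵀ = B) (u w : n → R) :
    (B *ᵥ w) ⬝ᵥ w - (A *ᵥ u) ⬝ᵥ u
      = (B *ᵥ w - A *ᵥ u) ⬝ᵥ (w + u) - w ⬝ᵥ ((B - A) *ᵥ u) := by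
  have hBwu : (B *ᵥ w) ⬝ᵥ u = w ⬝ᵥ (B *ᵥ u) := by
    rw [dotProduct_comm, dotProduct_mulVec, ← mulVec_transpose, hB, dotProduct_comm]
  simp only [sub_dotProduct, dotProduct_add, sub_mulVec, dotProduct_sub, hBwu,
    dotProduct_comm (A *ᵥ u) w]
  ring

variable [DecidableEq n]

theorem Matrix.PosSemidef.mulVec_inv_add_smul_one_mulVec {K : Matrix n n ℝ} (hK : K.PosSemidef)
    {s : ℝ} (hs : 0 < s) (v : n → ℝ) : (K + s • 1) *ᵥ ((K + s • 1)⁻¹ *ᵥ v) = v := by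
  rw [mulVec_mulVec, mul_nonsing_inv _ ((hK.posDef_add_smul_one hs).isUnit.map detMonoidHom),
    one_mulVec]

theorem Matrix.PosSemidef.norm_inv_add_smul_one_mulVec_le {K : Matrix n n ℝ} (hK : K.PosSemidef)
    {s : ℝ} (hs : 0 < s) (v : n → ℝ) :
    ‖toLp 2 ((K + s • 1)⁻¹ *ᵥ v)‖ ≤ ‖toLp 2 v‖ / s := by
  set u := (K + s • 1)⁻¹ *ᵥ v
  have hAu : (K + s • 1) *ᵥ u = v := hK.mulVec_inv_add_smul_one_mulVec hs v
  have hcoercive : s * ‖toLp 2 u‖ ^ 2 ≤ ‖toLp 2 u‖ * ‖toLp 2 v‖ := by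
    have hKu : 0 ≤ u ⬝ᵥ (K *ᵥ u) := by simpa using hK.dotProduct_mulVec_nonneg u
    calc s * ‖toLp 2 u‖ ^ 2 ≤ u ⬝ᵥ (K *ᵥ u) + s * (u ⬝ᵥ u) := by
          rw [dotProduct_self_eq_norm_sq]; linarith
      _ = u ⬝ᵥ v := by
          rw [← hAu, add_mulVec, dotProduct_add, smul_mulVec, one_mulVec, dotProduct_smul,
            smul_eq_mul]
      _ ≤ ‖toLp 2 u‖ * ‖toLp 2 v‖ := (le_abs_self _).trans (abs_dotProduct_le_norm_mul_norm u v)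
  rw [le_div_iff₀ hs]
  rcases (norm_nonneg (toLp 2 u)).eq_or_lt with hu | hu
  · rw [← hu, zero_mul]; exact norm_nonneg _
  · nlinarith

theorem abs_dotProduct_inv_add_smul_one_sub_le {K K' : Matrix n n ℝ} (hK : K.PosSemidef)
    (hK' : K'.PosSemidef) {s : ℝ} (hs : 0 < s) {v v' : n → ℝ} {a b d : ℝ}
    (hv : ‖toLp 2 v‖ ≤ a) (hv' : ‖toLp 2 v'‖ ≤ a) (hvv' : ‖toLp 2 (v' - v)‖ ≤ b)
    (hKK' : ∀ i j, |K' i j - K i j| ≤ d) :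
    |v' ⬝ᵥ ((K' + s • 1)⁻¹ *ᵥ v') - v ⬝ᵥ ((K + s • 1)⁻¹ *ᵥ v)|
      ≤ 2 * a * b / s + Fintype.card n * d * a ^ 2 / s ^ 2 := by
  set A := K + s • 1
  set A' := K' + s • 1
  set u := A⁻¹ *ᵥ v
  set u' := A'⁻¹ *ᵥ v'
  have hA' : A'ᵀ = A' := by
    rw [← conjTranspose_eq_transpose_of_trivial]
    exact (hK'.posDef_add_smul_one hs).isHermitian.eq
  have hAu : A *ᵥ u = v := hK.mulVec_inv_add_smul_one_mulVec hs v
  have hAu' : A' *ᵥ u' = v' := hK'.mulVec_inv_add_smul_one_mulVec hs v'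
  have hu : ‖toLp 2 u‖ ≤ a / s :=
    (hK.norm_inv_add_smul_one_mulVec_le hs v).trans (div_le_div_of_nonneg_right hv hs.le)
  have hu' : ‖toLp 2 u'‖ ≤ a / s :=
    (hK'.norm_inv_add_smul_one_mulVec_le hs v').trans (div_le_div_of_nonneg_right hv' hs.le)
  have hcard_d : 0 ≤ Fintype.card n * d := by
    rcases isEmpty_or_nonempty n with hn | ⟨⟨i₀⟩⟩
    · simp
    · exact mul_nonneg (Nat.cast_nonneg _) ((abs_nonneg _).trans (hKK' i₀ i₀))
  have hAA' : ‖toLp 2 ((A' - A) *ᵥ u)‖ ≤ Fintype.card n * d * (a / s) := by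
    have : A' - A = K' - K := by simp only [A, A']; abel
    rw [this]
    exact (norm_mulVec_le_card_mul hKK' u).trans (mul_le_mul_of_nonneg_left hu hcard_d)
  have hidentity : v' ⬝ᵥ u' - v ⬝ᵥ u = (v' - v) ⬝ᵥ (u' + u) - u' ⬝ᵥ ((A' - A) *ᵥ u) := by
    rw [← hAu, ← hAu']
    exact mulVec_dotProduct_sub_mulVec_dotProduct hA' u u'
  calc |v' ⬝ᵥ u' - v ⬝ᵥ u|
      ≤ ‖toLp 2 (v' - v)‖ * ‖toLp 2 (u' + u)‖ + ‖toLp 2 u'‖ * ‖toLp 2 ((A' - A) *ᵥ u)‖ := by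
        rw [hidentity]
        exact (abs_sub _ _).trans (add_le_add (abs_dotProduct_le_norm_mul_norm _ _)
          (abs_dotProduct_le_norm_mul_norm _ _))
    _ ≤ b * (a / s + a / s) + a / s * (Fintype.card n * d * (a / s)) := by
        have hb : 0 ≤ b := (norm_nonneg _).trans hvv'
        have has : 0 ≤ a / s := (norm_nonneg _).trans hu
        rw [toLp_add]
        gcongr
        exact (norm_add_le _ _).trans (add_le_add hu' hu)
    _ = 2 * a * b / s + Fintype.card n * d * a ^ 2 / s ^ 2 := by ring

end

/-- Lipschitz continuity of the GP posterior variance in the kernel hyperparameter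
(measured in the kernel sup-metric). -/
theorem stmt_9 {X : Type*} (m : ℕ) (xs : Fin m → X)
    (σ : ℝ) (hσ : 0 < σ)
    (k khat : X → X → ℝ)
    (hk : ∀ x x', |k x x'| ≤ 1) (hkhat : ∀ x x', |khat x x'| ≤ 1)
    (d : ℝ) (hd : ∀ x x', |khat x x' - k x x'| ≤ d)
    (hK : (Matrix.of fun i j => k (xs i) (xs j)).PosSemidef)
    (hKhat : (Matrix.of fun i j => khat (xs i) (xs j)).PosSemidef)
    (var varhat : X → ℝ)
    (hvar : ∀ x, var x = k x x -
      (fun i => k (xs i) x) ⬝ᵥ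
        ((Matrix.of (fun i j => k (xs i) (xs j)) + σ ^ 2 • (1 : Matrix (Fin m) (Fin m) ℝ))⁻¹).mulVec
          (fun i => k (xs i) x))
    (hvarhat : ∀ x, varhat x = khat x x -
      (fun i => khat (xs i) x) ⬝ᵥ
        ((Matrix.of (fun i j => khat (xs i) (xs j)) + σ ^ 2 • (1 : Matrix (Fin m) (Fin m) ℝ))⁻¹).mulVec
          (fun i => khat (xs i) x)) :
    ∀ x, |varhat x - var x| ≤ (1 + m / σ ^ 2) ^ 2 * d := by
  intro x
  have hv := norm_toLp_le_sqrt_card_mul fun i => hk (xs i) x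
  have hv' := norm_toLp_le_sqrt_card_mul fun i => hkhat (xs i) x
  have hvv' := norm_toLp_le_sqrt_card_mul fun i => hd (xs i) x
  rw [mul_one] at hv hv'
  have hquad := abs_dotProduct_inv_add_smul_one_sub_le hK hKhat (pow_pos hσ 2) hv hv' hvv'
    (fun i j => hd (xs i) (xs j))
  simp only [Fintype.card_fin] at hquad
  calc |varhat x - var x|
      ≤ |khat x x - k x x| + |_ - _| := by
        rw [hvar, hvarhat, sub_sub_sub_comm]
        exact abs_sub _ _
    _ ≤ d + (2 * √m * (√m * d) / σ ^ 2 + m * d * √m ^ 2 / (σ ^ 2) ^ 2) := add_le_add (hd x x) hquad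
    _ = (1 + m / σ ^ 2) ^ 2 * d := by
        field_simp
        rw [Real.sq_sqrt (Nat.cast_nonneg m)]
        ring
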